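/- arXiv:2412.16684 — 2 statements merged into one kernel-verified Lean document; each statement's English description precedes it below -/
import Mathlib

section
/- Let W, W' be symmetric N×N real matrices with zero diagonal, N = m+n, and define under the permutation null U_w = ((n−1)U_x + (m−1)U_y)/(N−2) and U_diff = U_x − U_y (similarly U'_w, U'_diff from W'). Then Cov(U_w − E U_w, U'_diff − E U'_diff) = 0; i.e., the 'weighted sum' and 'difference' components are uncorrelated under the permutation distribution. -/
open Finset

/-- Expectation under the uniform distribution on permutations of `Fin N`. -/
noncomputable def pE {N : ℕ} (f : Equiv.Perm (Fin N) → ℝ) : ℝ :=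
  (∑ π : Equiv.Perm (Fin N), f π) / (Fintype.card (Equiv.Perm (Fin N)) : ℝ)

/-- Covariance under the uniform distribution on permutations of `Fin N`. -/
noncomputable def pCov {N : ℕ} (f g : Equiv.Perm (Fin N) → ℝ) : ℝ :=
  pE (fun π => (f π - pE f) * (g π - pE g))

/-- Within-first-group sum: sums `W i j` over pairs both assigned to the first `m` labels. -/
noncomputable def Ux {N : ℕ} (W : Matrix (Fin N) (Fin N) ℝ) (m : ℕ)
    (π : Equiv.Perm (Fin N)) : ℝ :=
  ∑ i, ∑ j, if (π i : ℕ) < m ∧ (π j : ℕ) < m then W i j else 0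

/-- Within-second-group sum: sums `W i j` over pairs both assigned to labels `> m`. -/
noncomputable def Uy {N : ℕ} (W : Matrix (Fin N) (Fin N) ℝ) (m : ℕ)
    (π : Equiv.Perm (Fin N)) : ℝ :=
  ∑ i, ∑ j, if m ≤ (π i : ℕ) ∧ m ≤ (π j : ℕ) then W i j else 0

/-!
Write `Z_i = indX m i` for the indicator that unit `i` lands in `X`. Then
`(n-1) U_x + (m-1) U_y = ∑ W i j φ_ij` with
`φ_ij = uwPair m n i j = (n-1) Z_i Z_j + (m-1) (1 - Z_i) (1 - Z_j)`,
while `U'_x - U'_y = ∑ W' k l (Z_k + Z_l - 1)` is affine in the `Z`'s. As `W` has zero diagonal,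
it suffices that `φ_ij` is uncorrelated with every `Z_k` when `i ≠ j`. For `k = i` this follows
from `E Z_i = m/N` and `E Z_i Z_j = m(m-1)/(N(N-1))`; for `k ∉ {i, j}` all these covariances
agree by exchangeability, and together with those for `k = i, j` they sum to
`Cov(φ_ij, ∑ Z_k) = Cov(φ_ij, m) = 0`.
-/

open Equiv

section
variable {N m n : ℕ}

lemma pE_add (f g : Perm (Fin N) → ℝ) : pE (fun π => f π + g π) = pE f + pE g := by
  unfold pE; rw [sum_add_distrib, add_div]

lemma pE_sub (f g : Perm (Fin N) → ℝ) : pE (fun π => f π - g π) = pE f - pE g := by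
  unfold pE; rw [sum_sub_distrib, sub_div]

lemma pE_const_mul (c : ℝ) (f : Perm (Fin N) → ℝ) : pE (fun π => c * f π) = c * pE f := by
  unfold pE; rw [← mul_sum, mul_div_assoc]

lemma pE_const (c : ℝ) : pE (fun _ : Perm (Fin N) => c) = c := by
  unfold pE
  rw [sum_const, card_univ, nsmul_eq_mul]
  field_simp

lemma pE_sum {ι : Type*} (s : Finset ι) (F : ι → Perm (Fin N) → ℝ) :
    pE (fun π => ∑ x ∈ s, F x π) = ∑ x ∈ s, pE (F x) := by
  unfold pE; rw [sum_comm, sum_div]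

lemma pE_comp_mul_right (σ : Perm (Fin N)) (f : Perm (Fin N) → ℝ) :
    pE (fun π => f (π * σ)) = pE f := by
  unfold pE
  exact congrArg (· / _) (Equiv.sum_comp (Equiv.mulRight σ) f)

lemma pCov_eq_sub (f g : Perm (Fin N) → ℝ) :
    pCov f g = pE (fun π => f π * g π) - pE f * pE g := by
  have hexp : (fun π => (f π - pE f) * (g π - pE g))
      = fun π => (f π * g π + -pE g * f π) + (-pE f * g π + pE f * pE g) := by
    funext π; ring
  rw [pCov, hexp, pE_add, pE_add, pE_add, pE_const_mul, pE_const_mul, pE_const]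
  ring

lemma pCov_comm (f g : Perm (Fin N) → ℝ) : pCov f g = pCov g f := by
  simp only [pCov, mul_comm]

lemma pCov_comp_mul_right (σ : Perm (Fin N)) (f g : Perm (Fin N) → ℝ) :
    pCov (fun π => f (π * σ)) (fun π => g (π * σ)) = pCov f g := by
  unfold pCov
  rw [pE_comp_mul_right, pE_comp_mul_right]
  exact pE_comp_mul_right σ fun π => (f π - pE f) * (g π - pE g)

lemma pCov_sub_const_left (f : Perm (Fin N) → ℝ) (c : ℝ) (g : Perm (Fin N) → ℝ) :
    pCov (fun π => f π - c) g = pCov f g := by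
  simp only [pCov, pE_sub, pE_const, sub_sub_sub_cancel_right]

lemma pCov_sub_const_right (f g : Perm (Fin N) → ℝ) (c : ℝ) :
    pCov f (fun π => g π - c) = pCov f g := by
  rw [pCov_comm, pCov_sub_const_left, pCov_comm]

lemma pCov_const_left (c : ℝ) (g : Perm (Fin N) → ℝ) : pCov (fun _ => c) g = 0 := by
  simp only [pCov, pE_const, sub_self, zero_mul]

lemma pCov_const_right (f : Perm (Fin N) → ℝ) (c : ℝ) : pCov f (fun _ => c) = 0 := by
  rw [pCov_comm, pCov_const_left]

lemma pCov_const_mul_left (c : ℝ) (f g : Perm (Fin N) → ℝ) :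
    pCov (fun π => c * f π) g = c * pCov f g := by
  simp only [pCov_eq_sub, mul_assoc, pE_const_mul]
  ring

lemma pCov_div_const_left (f : Perm (Fin N) → ℝ) (c : ℝ) (g : Perm (Fin N) → ℝ) :
    pCov (fun π => f π / c) g = pCov f g / c := by
  simp only [div_eq_inv_mul, pCov_const_mul_left]

lemma pCov_add_left (f h g : Perm (Fin N) → ℝ) :
    pCov (fun π => f π + h π) g = pCov f g + pCov h g := by
  simp only [pCov_eq_sub, add_mul, pE_add]
  ring

lemma pCov_sum_left {ι : Type*} (s : Finset ι) (F : ι → Perm (Fin N) → ℝ)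
    (g : Perm (Fin N) → ℝ) :
    pCov (fun π => ∑ x ∈ s, F x π) g = ∑ x ∈ s, pCov (F x) g := by
  simp only [pCov_eq_sub, sum_mul, pE_sum, sum_sub_distrib]

lemma pCov_sum_right {ι : Type*} (f : Perm (Fin N) → ℝ) (s : Finset ι)
    (G : ι → Perm (Fin N) → ℝ) :
    pCov f (fun π => ∑ x ∈ s, G x π) = ∑ x ∈ s, pCov f (G x) := by
  rw [pCov_comm, pCov_sum_left]
  exact sum_congr rfl fun x _ => pCov_comm _ _

noncomputable def indX (m : ℕ) (i : Fin N) (π : Perm (Fin N)) : ℝ :=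
  if (π i : ℕ) < m then 1 else 0

lemma indX_mul (i : Fin N) (π σ : Perm (Fin N)) : indX m i (π * σ) = indX m (σ i) π := rfl

lemma indX_mul_self (i : Fin N) (π : Perm (Fin N)) : indX m i π * indX m i π = indX m i π := by
  unfold indX; split_ifs <;> norm_num

lemma sum_indX (hm : m ≤ N) (π : Perm (Fin N)) : ∑ i, indX m i π = m := by
  rw [show ∑ i, indX m i π = ∑ a : Fin N, if (a : ℕ) < m then (1 : ℝ) else 0 from
      Equiv.sum_comp π fun a : Fin N => if (a : ℕ) < m then (1 : ℝ) else 0,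
    sum_boole, Fin.card_filter_val_lt, min_eq_right hm]

lemma pE_mul_indX_swap {G : Perm (Fin N) → ℝ} {k k' : Fin N}
    (hG : ∀ π, G (π * swap k k') = G π) :
    pE (fun π => G π * indX m k π) = pE (fun π => G π * indX m k' π) := by
  rw [← pE_comp_mul_right (swap k k')]
  simp only [hG, indX_mul, swap_apply_left]

lemma pCov_indX_swap {G : Perm (Fin N) → ℝ} {k k' : Fin N}
    (hG : ∀ π, G (π * swap k k') = G π) :
    pCov G (indX m k) = pCov G (indX m k') := by
  rw [← pCov_comp_mul_right (swap k k')]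
  simp only [hG, indX_mul, swap_apply_left]

lemma pE_indX (hm : m ≤ N) (i : Fin N) : pE (indX m i) = m / N := by
  have hsame : ∀ i' ∈ univ, pE (indX m i') = pE (indX m i) := fun i' _ => by
    rw [← pE_comp_mul_right (swap i' i)]
    simp only [indX_mul, swap_apply_left]
  have htotal : ∑ i' : Fin N, pE (indX m i') = m := by
    rw [← pE_sum, ← pE_const (N := N) (m : ℝ)]
    exact congrArg pE (funext (sum_indX hm))
  rw [sum_eq_card_nsmul hsame, card_univ, Fintype.card_fin, nsmul_eq_mul] at htotal
  have hN : (N : ℝ) ≠ 0 := Nat.cast_ne_zero.2 (Fin.pos i).ne'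
  rw [← htotal]
  field_simp

lemma natCast_sub_one_ne_zero_of_ne {i j : Fin N} (hij : i ≠ j) : (N : ℝ) - 1 ≠ 0 := by
  have : 2 ≤ N := by
    have := Fin.val_ne_of_ne hij
    omega
  have : (2 : ℝ) ≤ N := by exact_mod_cast this
  linarith

lemma pE_indX_mul_indX (hm : m ≤ N) {i j : Fin N} (hij : i ≠ j) :
    pE (fun π => indX m i π * indX m j π) = m * (m - 1) / (N * (N - 1)) := by
  have hsame : ∀ j' ∈ univ.erase i,
      pE (fun π => indX m i π * indX m j' π) = pE (fun π => indX m i π * indX m j π) :=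
    fun j' hj' => pE_mul_indX_swap fun π => by
      rw [indX_mul, swap_apply_of_ne_of_ne (Ne.symm (ne_of_mem_erase hj')) hij]
  have htotal : ∑ j' ∈ univ.erase i, pE (fun π => indX m i π * indX m j' π)
      = (m - 1) * pE (indX m i) := by
    rw [← pE_sum, ← pE_const_mul]
    refine congrArg pE (funext fun π => ?_)
    rw [← mul_sum, sum_erase_eq_sub (mem_univ i), sum_indX hm]
    linear_combination -(indX_mul_self i π)
  rw [sum_eq_card_nsmul hsame, card_erase_of_mem (mem_univ i), card_univ, Fintype.card_fin,
    nsmul_eq_mul, Nat.cast_pred (Fin.pos i), pE_indX hm] at htotal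
  have hN0 : (N : ℝ) ≠ 0 := Nat.cast_ne_zero.2 (Fin.pos i).ne'
  have hN1 := natCast_sub_one_ne_zero_of_ne hij
  rw [eq_div_iff (mul_ne_zero hN0 hN1)]
  field_simp at htotal
  linear_combination htotal

noncomputable def uwPair (m n : ℕ) (i j : Fin N) (π : Perm (Fin N)) : ℝ :=
  ((n : ℝ) - 1) * (indX m i π * indX m j π)
    + ((m : ℝ) - 1) * ((1 - indX m i π) * (1 - indX m j π))

lemma uwPair_comm (i j : Fin N) : uwPair m n i j = uwPair m n j i := by
  funext π; unfold uwPair; ring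

lemma pE_uwPair (hN : N = m + n) {i j : Fin N} (hij : i ≠ j) :
    pE (uwPair m n i j) = (m - 1) * (n - 1) / (N - 1) := by
  have hexp : uwPair m n i j = fun π => ((n : ℝ) - 1) * (indX m i π * indX m j π)
      + ((m : ℝ) - 1) * ((1 - indX m i π - indX m j π) + indX m i π * indX m j π) := by
    funext π; unfold uwPair; ring
  have hm : m ≤ N := by omega
  have hN0 : (N : ℝ) ≠ 0 := Nat.cast_ne_zero.2 (Fin.pos i).ne'
  have hN1 := natCast_sub_one_ne_zero_of_ne hij
  simp only [hexp, pE_add, pE_sub, pE_const_mul, pE_const, pE_indX_mul_indX hm hij, pE_indX hm]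
  field_simp
  rw [hN, Nat.cast_add]
  ring

lemma pCov_uwPair_indX_left (hN : N = m + n) {i j : Fin N} (hij : i ≠ j) :
    pCov (uwPair m n i j) (indX m i) = 0 := by
  have hmul : (fun π => uwPair m n i j π * indX m i π)
      = fun π => ((n : ℝ) - 1) * (indX m i π * indX m j π) := by
    funext π
    unfold uwPair
    linear_combination ((n - 1 : ℝ) * indX m j π - (m - 1) * (1 - indX m j π)) *
      indX_mul_self (m := m) i π
  have hm : m ≤ N := by omega
  have hN0 : (N : ℝ) ≠ 0 := Nat.cast_ne_zero.2 (Fin.pos i).ne'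
  have hN1 := natCast_sub_one_ne_zero_of_ne hij
  rw [pCov_eq_sub, hmul, pE_const_mul, pE_uwPair hN hij, pE_indX_mul_indX hm hij, pE_indX hm]
  field_simp
  ring

lemma pCov_uwPair_indX (hN : N = m + n) {i j : Fin N} (hij : i ≠ j) (k : Fin N) :
    pCov (uwPair m n i j) (indX m k) = 0 := by
  have hi := pCov_uwPair_indX_left hN hij
  have hj : pCov (uwPair m n i j) (indX m j) = 0 := by
    rw [uwPair_comm]; exact pCov_uwPair_indX_left hN hij.symm
  by_cases hki : k = i
  · rwa [hki]
  by_cases hkj : k = j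
  · rwa [hkj]
  set rest := (univ.erase i).erase j
  have hj_mem : j ∈ univ.erase i := mem_erase.2 ⟨hij.symm, mem_univ j⟩
  have hk_mem : k ∈ rest := mem_erase.2 ⟨hkj, mem_erase.2 ⟨hki, mem_univ k⟩⟩
  have hsame :
      ∀ k' ∈ rest, pCov (uwPair m n i j) (indX m k') = pCov (uwPair m n i j) (indX m k) :=
    fun k' hk' => pCov_indX_swap fun π => by
      have hk'j := ne_of_mem_erase hk'
      have hk'i := ne_of_mem_erase (mem_of_mem_erase hk')
      simp only [uwPair, indX_mul, swap_apply_of_ne_of_ne (Ne.symm hk'i) (Ne.symm hki),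
        swap_apply_of_ne_of_ne (Ne.symm hk'j) (Ne.symm hkj)]
  have htotal : ∑ k', pCov (uwPair m n i j) (indX m k') = 0 := by
    rw [← pCov_sum_right, funext (sum_indX (show m ≤ N by omega)), pCov_const_right]
  rw [← add_sum_erase _ _ (mem_univ i), ← add_sum_erase _ _ hj_mem, hi, hj,
    sum_eq_card_nsmul hsame, zero_add, zero_add, smul_eq_zero] at htotal
  exact htotal.resolve_left (card_ne_zero_of_mem hk_mem)

lemma Ux_eq_sum_indX (V : Matrix (Fin N) (Fin N) ℝ) (π : Perm (Fin N)) :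
    Ux V m π = ∑ i, ∑ j, V i j * (indX m i π * indX m j π) := by
  unfold Ux indX
  refine sum_congr rfl fun i _ => sum_congr rfl fun j _ => ?_
  split_ifs <;> simp_all

lemma Uy_eq_sum_indX (V : Matrix (Fin N) (Fin N) ℝ) (π : Perm (Fin N)) :
    Uy V m π = ∑ i, ∑ j, V i j * ((1 - indX m i π) * (1 - indX m j π)) := by
  unfold Uy indX
  refine sum_congr rfl fun i _ => sum_congr rfl fun j _ => ?_
  split_ifs <;> first | omega | simp_all

lemma uw_eq_sum_uwPair (V : Matrix (Fin N) (Fin N) ℝ) (π : Perm (Fin N)) :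
    ((n : ℝ) - 1) * Ux V m π + ((m : ℝ) - 1) * Uy V m π
      = ∑ i, ∑ j, V i j * uwPair m n i j π := by
  simp only [Ux_eq_sum_indX, Uy_eq_sum_indX, mul_sum, ← sum_add_distrib, uwPair]
  exact sum_congr rfl fun i _ => sum_congr rfl fun j _ => by ring

lemma Ux_sub_Uy_eq_sum_indX (V : Matrix (Fin N) (Fin N) ℝ) (π : Perm (Fin N)) :
    Ux V m π - Uy V m π = ∑ k, ∑ l, V k l * (indX m k π + indX m l π - 1) := by
  simp only [Ux_eq_sum_indX, Uy_eq_sum_indX, ← sum_sub_distrib]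
  exact sum_congr rfl fun k _ => sum_congr rfl fun l _ => by ring

lemma pCov_uwPair_Ux_sub_Uy (hN : N = m + n) {i j : Fin N} (hij : i ≠ j)
    (V : Matrix (Fin N) (Fin N) ℝ) :
    pCov (uwPair m n i j) (fun π => Ux V m π - Uy V m π) = 0 := by
  simp only [Ux_sub_Uy_eq_sum_indX, pCov_sum_right]
  refine sum_eq_zero fun k _ => sum_eq_zero fun l _ => ?_
  rw [pCov_comm, pCov_const_mul_left, pCov_sub_const_left, pCov_add_left, pCov_comm,
    pCov_uwPair_indX hN hij, pCov_comm, pCov_uwPair_indX hN hij, add_zero, mul_zero]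

end

theorem stmt_4_general (m n N : ℕ) (hN : N = m + n)
    (W W' : Matrix (Fin N) (Fin N) ℝ)
    (hdiag : ∀ i, W i i = 0) :
    pCov
      (fun π => (((n : ℝ) - 1) * Ux W m π + ((m : ℝ) - 1) * Uy W m π) / ((N : ℝ) - 2)
        - pE (fun π' => (((n : ℝ) - 1) * Ux W m π' + ((m : ℝ) - 1) * Uy W m π') / ((N : ℝ) - 2)))
      (fun π => (Ux W' m π - Uy W' m π)
        - pE (fun π' => Ux W' m π' - Uy W' m π')) = 0 := by
  rw [pCov_sub_const_left, pCov_sub_const_right, pCov_div_const_left, div_eq_zero_iff]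
  left
  simp only [uw_eq_sum_uwPair, pCov_sum_left, pCov_const_mul_left]
  refine sum_eq_zero fun i _ => sum_eq_zero fun j _ => ?_
  rcases eq_or_ne i j with rfl | hij
  · rw [hdiag, zero_mul]
  · rw [pCov_uwPair_Ux_sub_Uy hN hij, mul_zero]

theorem stmt_4 (m n N : ℕ) (hm : 2 ≤ m) (hn : 2 ≤ n) (hN : N = m + n)
    (W W' : Matrix (Fin N) (Fin N) ℝ)
    (hsym : W.IsSymm) (hdiag : ∀ i, W i i = 0)
    (hsym' : W'.IsSymm) (hdiag' : ∀ i, W' i i = 0) :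
    pCov
      (fun π => (((n : ℝ) - 1) * Ux W m π + ((m : ℝ) - 1) * Uy W m π) / ((N : ℝ) - 2)
        - pE (fun π' => (((n : ℝ) - 1) * Ux W m π' + ((m : ℝ) - 1) * Uy W m π') / ((N : ℝ) - 2)))
      (fun π => (Ux W' m π - Uy W' m π)
        - pE (fun π' => Ux W' m π' - Uy W' m π')) = 0 :=
  stmt_4_general m n N hN W W' hdiag
end

section
/- With the same setup, Cov(U_diff, U'_diff) = (4mn/(N(N−1))) · W̃_3, where U_diff = U_x − U_y for matrix W and U'_diff likewise for W', and W̃_3 = Σ_{i,j,r} W_{ij}W'_{ir} − W_1 W'_1 / N. -/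
open Finset

open scoped BigOperators

/-!
With `ε i = [π i < m]`, symmetry of `W` gives `U_x - U_y = 2 ∑ i, r i * ε i - ∑ W` for the row
sums `r`, so the covariance is `4 ∑ i j, r i * r' j * Cov(ε i, ε j)`. Under a uniform
permutation, `π i` is uniform on the labels and `(π i, π j)` is uniform on pairs of distinct
labels (both are orbit averages of a transitive action), whence `Var(ε i) = mn/N²` and
`Cov(ε i, ε j) = -mn/(N²(N-1))` for `i ≠ j`; summing gives the formula.
-/

section OrbitAverage

variable {G X M : Type*} [Group G] [Fintype G] [MulAction G X]
  [AddCommMonoid M] [Module ℚ≥0 M]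

theorem expect_smul_eq_expect_of_transitive (s : Finset X)
    (hs : ∀ g : G, ∀ x ∈ s, g • x ∈ s) (htrans : ∀ x ∈ s, ∀ y ∈ s, ∃ g : G, g • x = y)
    (f : X → M) {x : X} (hx : x ∈ s) :
    𝔼 g : G, f (g • x) = 𝔼 y ∈ s, f y := by
  have hconst : ∀ y ∈ s, 𝔼 g : G, f (g • y) = 𝔼 g : G, f (g • x) := by
    intro y hy
    obtain ⟨h, rfl⟩ := htrans x hx y hy
    exact Fintype.expect_equiv (Equiv.mulRight h) _ _ fun g => by simp [mul_smul]
  calc 𝔼 g : G, f (g • x) = 𝔼 y ∈ s, 𝔼 g : G, f (g • y) := by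
        rw [expect_congr rfl hconst, expect_const ⟨x, hx⟩]
    _ = 𝔼 g : G, 𝔼 y ∈ s, f (g • y) := expect_comm _ _ _
    _ = 𝔼 g : G, 𝔼 y ∈ s, f y := by
        refine expect_congr rfl fun g _ => ?_
        exact expect_nbij' (g • ·) (g⁻¹ • ·) (fun y hy => hs _ y hy) (fun y hy => hs _ y hy)
          (by simp) (by simp) (by simp)
    _ = 𝔼 y ∈ s, f y := Fintype.expect_const _

end OrbitAverage

section UniformPermutation

variable {α M : Type*} [Fintype α] [DecidableEq α] [AddCommMonoid M] [Module ℚ≥0 M]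

theorem expect_perm_apply (f : α → M) (i : α) :
    𝔼 π : Equiv.Perm α, f (π i) = 𝔼 k, f k :=
  expect_smul_eq_expect_of_transitive (G := Equiv.Perm α) univ (by simp)
    (fun x _ y _ => MulAction.exists_smul_eq _ x y) f (mem_univ i)

theorem expect_perm_apply_apply (f : α → α → M) {i j : α} (hij : i ≠ j) :
    𝔼 π : Equiv.Perm α, f (π i) (π j) = 𝔼 q ∈ univ.offDiag, f q.1 q.2 :=
  expect_smul_eq_expect_of_transitive (G := Equiv.Perm α) (X := α × α) univ.offDiag
    (by simp) (by
      rintro ⟨a, b⟩ hab ⟨c, d⟩ hcd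
      obtain ⟨g, hga, hgb⟩ := MulAction.is_two_pretransitive_iff.mp
        (Equiv.Perm.isMultiplyPretransitive α 2) (by simpa using hab) (by simpa using hcd)
      exact ⟨g, by simp [hga, hgb]⟩)
    (fun q => f q.1 q.2) (x := (i, j)) (by simpa using hij)

end UniformPermutation

theorem Finset.sum_offDiag_mul {α R : Type*} [DecidableEq α] [CommRing R] (s : Finset α)
    (g : α → R) : ∑ q ∈ s.offDiag, g q.1 * g q.2 = (∑ k ∈ s, g k) ^ 2 - ∑ k ∈ s, g k ^ 2 := by
  have hsplit := sum_union (disjoint_diag_offDiag (s := s)) (f := fun q => g q.1 * g q.2)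
  rw [diag_union_offDiag, sum_product, diag, sum_map] at hsplit
  simp only [Function.Embedding.coeFn_mk, Function.diag] at hsplit
  rw [sq, sum_mul_sum, hsplit]
  simp only [sq, add_sub_cancel_left]

section Indicator

variable {α : Type*} [Fintype α] (p : α → Prop) [DecidablePred p]

theorem Fintype.expect_boole :
    𝔼 k : α, (if p k then (1 : ℝ) else 0) = #{k | p k} / Fintype.card α := by
  rw [Fintype.expect_eq_sum_div_card, sum_boole]

theorem expect_offDiag_boole_mul_boole [DecidableEq α] :
    𝔼 q ∈ (univ : Finset α).offDiag, (if p q.1 then (1 : ℝ) else 0) * (if p q.2 then 1 else 0)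
      = #{k | p k} * (#{k | p k} - 1) / (Fintype.card α * (Fintype.card α - 1)) := by
  have hsq : ∀ k, (if p k then (1 : ℝ) else 0) ^ 2 = if p k then 1 else 0 := fun k => by
    split_ifs <;> simp
  have hsum := sum_offDiag_mul univ fun k => if p k then (1 : ℝ) else 0
  rw [expect_eq_sum_div_card, hsum, offDiag_card, card_univ,
    Nat.cast_sub (Nat.le_mul_self _)]
  simp only [hsq, sum_boole]
  push_cast
  ring

end Indicator

section UniformCovariance

variable {N : ℕ}

theorem pE_eq_expect (f : Equiv.Perm (Fin N) → ℝ) : pE f = 𝔼 π, f π := by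
  rw [pE, Fintype.expect_eq_sum_div_card]

theorem pE_mul (f : Equiv.Perm (Fin N) → ℝ) (a : ℝ) : pE (fun π => a * f π) = a * pE f := by
  simp only [pE_eq_expect, mul_expect]

theorem pE_mul_sub (f : Equiv.Perm (Fin N) → ℝ) (a c : ℝ) :
    pE (fun π => a * f π - c) = a * pE f - c := by
  simp only [pE_eq_expect, expect_sub_distrib, ← mul_expect, Fintype.expect_const]

theorem pE_sum_mul {ι : Type*} [Fintype ι] (u : ι → ℝ) (F : ι → Equiv.Perm (Fin N) → ℝ) :
    pE (fun π => ∑ i, u i * F i π) = ∑ i, u i * pE (F i) := by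
  simp only [pE_eq_expect, expect_sum_comm, mul_expect]

theorem pCov_eq_pE_mul_sub (f g : Equiv.Perm (Fin N) → ℝ) :
    pCov f g = pE (fun π => f π * g π) - pE f * pE g := by
  simp only [pCov, pE_eq_expect, sub_mul, mul_sub, expect_sub_distrib, ← expect_mul,
    ← mul_expect, Fintype.expect_const]
  ring

theorem pCov_mul_sub_mul_sub (f g : Equiv.Perm (Fin N) → ℝ) (a b c d : ℝ) :
    pCov (fun π => a * f π - c) (fun π => b * g π - d) = a * b * pCov f g := by
  rw [pCov, pE_mul_sub, pE_mul_sub, pCov, ← pE_mul _ (a * b)]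
  congr 1
  funext π
  ring

theorem pCov_sum_mul_sum {ι κ : Type*} [Fintype ι] [Fintype κ] (u : ι → ℝ) (v : κ → ℝ)
    (F : ι → Equiv.Perm (Fin N) → ℝ) (G : κ → Equiv.Perm (Fin N) → ℝ) :
    pCov (fun π => ∑ i, u i * F i π) (fun π => ∑ j, v j * G j π)
      = ∑ i, ∑ j, u i * v j * pCov (F i) (G j) := by
  rw [pCov, pE_sum_mul, pE_sum_mul]
  calc pE (fun π => (∑ i, u i * F i π - ∑ i, u i * pE (F i))
          * (∑ j, v j * G j π - ∑ j, v j * pE (G j)))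
      = pE (fun π => ∑ i, u i * ∑ j, v j * ((F i π - pE (F i)) * (G j π - pE (G j)))) := by
        congr 1
        funext π
        simp only [← sum_sub_distrib, ← mul_sub]
        rw [sum_mul_sum]
        exact sum_congr rfl fun i _ => by rw [mul_sum]; exact sum_congr rfl fun j _ => by ring
    _ = ∑ i, ∑ j, u i * v j * pCov (F i) (G j) := by
        rw [pE_sum_mul]
        simp only [pE_sum_mul, mul_sum, mul_assoc, pCov]

theorem pCov_eq_zero_of_le_one (hN : N ≤ 1) (f g : Equiv.Perm (Fin N) → ℝ) : pCov f g = 0 := by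
  have : Subsingleton (Fin N) := Fin.subsingleton_iff_le_one.mpr hN
  have hpE : ∀ (h : Equiv.Perm (Fin N) → ℝ) π, pE h = h π := fun h π => by
    rw [pE_eq_expect, expect_congr rfl fun σ _ => congrArg h (Subsingleton.elim σ π),
      Fintype.expect_const]
  simp [pCov, hpE _ (1 : Equiv.Perm (Fin N))]

end UniformCovariance

section GroupIndicator

variable {N : ℕ} (p : Fin N → Prop) [DecidablePred p]

theorem pE_boole_apply (i : Fin N) :
    pE (fun π => if p (π i) then (1 : ℝ) else 0) = #{k | p k} / N := by
  rw [pE_eq_expect, expect_perm_apply (fun k => if p k then (1 : ℝ) else 0),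
    Fintype.expect_boole, Fintype.card_fin]

theorem pE_boole_apply_mul_boole_apply {i j : Fin N} (hij : i ≠ j) :
    pE (fun π => (if p (π i) then (1 : ℝ) else 0) * (if p (π j) then 1 else 0))
      = #{k | p k} * (#{k | p k} - 1) / (N * (N - 1)) := by
  rw [pE_eq_expect, expect_perm_apply_apply
    (fun k l => (if p k then (1 : ℝ) else 0) * (if p l then 1 else 0)) hij,
    expect_offDiag_boole_mul_boole, Fintype.card_fin]

theorem pCov_boole_apply_self (i : Fin N) :
    pCov (fun π => if p (π i) then (1 : ℝ) else 0) (fun π => if p (π i) then (1 : ℝ) else 0)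
      = #{k | p k} * (N - #{k | p k}) / N ^ 2 := by
  have hN : (N : ℝ) ≠ 0 := Nat.cast_ne_zero.mpr (Fin.pos i).ne'
  have hsq : ∀ π : Equiv.Perm (Fin N),
      (if p (π i) then (1 : ℝ) else 0) * (if p (π i) then 1 else 0)
        = if p (π i) then 1 else 0 := fun π => by split_ifs <;> simp
  rw [pCov_eq_pE_mul_sub, funext hsq, pE_boole_apply]
  field_simp

theorem pCov_boole_apply_of_ne {i j : Fin N} (hij : i ≠ j) :
    pCov (fun π => if p (π i) then (1 : ℝ) else 0) (fun π => if p (π j) then (1 : ℝ) else 0)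
      = -(#{k | p k} * (N - #{k | p k}) / (N ^ 2 * (N - 1))) := by
  have hN : 2 ≤ N := by
    have := Fintype.one_lt_card_iff.mpr ⟨i, j, hij⟩
    rwa [Fintype.card_fin] at this
  have hN₀ : (N : ℝ) ≠ 0 := by positivity
  have hN₁ : (N : ℝ) - 1 ≠ 0 := by
    have : (2 : ℝ) ≤ N := by exact_mod_cast hN
    linarith
  rw [pCov_eq_pE_mul_sub, pE_boole_apply_mul_boole_apply p hij, pE_boole_apply, pE_boole_apply]
  field_simp
  ring

theorem pCov_sum_mul_boole_apply (u v : Fin N → ℝ) :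
    pCov (fun π => ∑ i, u i * if p (π i) then (1 : ℝ) else 0)
        (fun π => ∑ i, v i * if p (π i) then (1 : ℝ) else 0)
      = #{k | p k} * (N - #{k | p k}) / (N * (N - 1))
          * (∑ i, u i * v i - (∑ i, u i) * (∑ i, v i) / N) := by
  rcases le_or_gt N 1 with hN | hN
  · have : (N : ℝ) * (N - 1) = 0 := by interval_cases N <;> norm_num
    rw [pCov_eq_zero_of_le_one hN, this, div_zero, zero_mul]
  set a : ℝ := (#{k | p k} : ℝ)
  have hcov : ∀ i j, pCov (fun π => if p (π i) then (1 : ℝ) else 0)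
      (fun π => if p (π j) then (1 : ℝ) else 0)
        = -(a * (N - a) / (N ^ 2 * (N - 1)))
          + if i = j then a * (N - a) / N ^ 2 + a * (N - a) / (N ^ 2 * (N - 1)) else 0 := by
    intro i j
    rcases eq_or_ne i j with rfl | hij
    · rw [pCov_boole_apply_self, if_pos rfl]
      ring
    · rw [pCov_boole_apply_of_ne p hij, if_neg hij, add_zero]
  rw [pCov_sum_mul_sum u v (fun i π => if p (π i) then (1 : ℝ) else 0)
    (fun j π => if p (π j) then (1 : ℝ) else 0)]
  simp only [hcov, mul_add, mul_ite, mul_zero, sum_add_distrib, sum_ite_eq, mem_univ, if_true,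
    ← sum_mul, ← mul_sum]
  have hN₀ : (N : ℝ) ≠ 0 := by positivity
  have hN₁ : (N : ℝ) - 1 ≠ 0 := by
    have : (1 : ℝ) < N := by exact_mod_cast hN
    linarith
  field_simp
  ring

end GroupIndicator

theorem Ux_sub_Uy {N : ℕ} {W : Matrix (Fin N) (Fin N) ℝ} (hW : W.IsSymm) (m : ℕ)
    (π : Equiv.Perm (Fin N)) :
    Ux W m π - Uy W m π
      = 2 * ∑ i, (∑ j, W i j) * (if (π i : ℕ) < m then 1 else 0) - ∑ i, ∑ j, W i j := by
  set ε : Fin N → ℝ := fun i => if (π i : ℕ) < m then 1 else 0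
  have hpair : ∀ i j, (if (π i : ℕ) < m ∧ (π j : ℕ) < m then W i j else 0)
      - (if m ≤ (π i : ℕ) ∧ m ≤ (π j : ℕ) then W i j else 0) = W i j * (ε i + ε j - 1) := by
    intro i j
    simp only [ε, ← not_lt]
    split_ifs <;> simp_all
  have hcol : ∑ i, ∑ j, W i j * ε j = ∑ i, (∑ j, W i j) * ε i := by
    rw [sum_comm]
    simp only [sum_mul, hW.apply]
  have hexpand : ∑ i, ∑ j, W i j * (ε i + ε j - 1)
      = ∑ i, (∑ j, W i j) * ε i + ∑ i, ∑ j, W i j * ε j - ∑ i, ∑ j, W i j := by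
    simp only [mul_sub, mul_add, mul_one, sum_sub_distrib, sum_add_distrib, ← sum_mul]
  rw [Ux, Uy, ← sum_sub_distrib]
  simp only [← sum_sub_distrib, hpair]
  rw [hexpand, hcol]
  ring

theorem stmt_6_general (m n N : ℕ) (hN : N = m + n)
    (W W' : Matrix (Fin N) (Fin N) ℝ)
    (hsym : W.IsSymm) (hsym' : W'.IsSymm) :
    pCov (fun π => Ux W m π - Uy W m π) (fun π => Ux W' m π - Uy W' m π) =
      (4 * (m : ℝ) * (n : ℝ) / ((N : ℝ) * ((N : ℝ) - 1))) *
        ((∑ i, ∑ j, ∑ r, W i j * W' i r)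
          - (∑ i, ∑ j, W i j) * (∑ i, ∑ j, W' i j) / (N : ℝ)) := by
  have hcard : #{k : Fin N | (k : ℕ) < m} = m := by
    rw [Fin.card_filter_val_lt]
    omega
  have hn : (N : ℝ) - m = n := by
    rw [hN, Nat.cast_add, add_sub_cancel_left]
  simp only [funext (Ux_sub_Uy hsym m), funext (Ux_sub_Uy hsym' m), pCov_mul_sub_mul_sub,
    pCov_sum_mul_boole_apply (fun k : Fin N => (k : ℕ) < m), hcard, hn, sum_mul_sum]
  ring

theorem stmt_6 (m n N : ℕ) (hm : 2 ≤ m) (hn : 2 ≤ n) (hN : N = m + n)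
    (W W' : Matrix (Fin N) (Fin N) ℝ)
    (hsym : W.IsSymm) (hdiag : ∀ i, W i i = 0)
    (hsym' : W'.IsSymm) (hdiag' : ∀ i, W' i i = 0) :
    pCov (fun π => Ux W m π - Uy W m π) (fun π => Ux W' m π - Uy W' m π) =
      (4 * (m : ℝ) * (n : ℝ) / ((N : ℝ) * ((N : ℝ) - 1))) *
        ((∑ i, ∑ j, ∑ r, W i j * W' i r)
          - (∑ i, ∑ j, W i j) * (∑ i, ∑ j, W' i j) / (N : ℝ)) :=
  stmt_6_general m n N hN W W' hsym hsym'
end
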